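/- arXiv:1909.00332 — 4 statements merged into one kernel-verified Lean document; each statement's English description precedes it below -/
import Mathlib

section
/- Let R be a principal ideal domain with field of fractions Q(R), and let Q(R)/R denote the quotient R-module of Q(R) by the canonical image of R. For every finitely generated torsion R-module N, the dual module N^∨ = Hom_R(N, Q(R)/R) is isomorphic to N as an R-module. -/
open Submodule DirectSum

section Aux

variable {R : Type*} [CommRing R] [IsDomain R]

/-- Hom from a cyclic quotient into any module is the torsion submodule. -/
noncomputable def homQuotEquivTorsionBy (M : Type*) [AddCommGroup M] [Module R M] (a : R) :
    ((R ⧸ Ideal.span {a}) →ₗ[R] M) ≃ₗ[R] Submodule.torsionBy R M a where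
  toFun f := ⟨f (Submodule.Quotient.mk 1), by
    rw [Submodule.mem_torsionBy_iff, ← map_smul, ← Submodule.Quotient.mk_smul,
      smul_eq_mul, mul_one, (Submodule.Quotient.mk_eq_zero _).mpr
        (Submodule.mem_span_singleton_self a), map_zero]⟩
  map_add' f g := by ext; simp
  map_smul' r f := by ext; simp
  invFun m := Submodule.liftQ (Ideal.span {a}) (LinearMap.toSpanSingleton R M m.1)
    (by
      rw [Ideal.span_le, Set.singleton_subset_iff]
      simp only [SetLike.mem_coe, LinearMap.mem_ker, LinearMap.toSpanSingleton_apply]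
      exact m.2)
  left_inv f := by
    apply Submodule.linearMap_qext
    ext
    simp only [LinearMap.comp_apply, Submodule.mkQ_apply, Submodule.liftQ_apply,
      LinearMap.toSpanSingleton_apply]
    rw [← map_smul, ← Submodule.Quotient.mk_smul, smul_eq_mul, mul_one]
  right_inv m := by
    ext
    show (LinearMap.toSpanSingleton R M m.1) 1 = m.1
    simp

variable (R) in
/-- The torsion submodule of `Q(R)/R` at a nonzero element `a` is `R/(a)`. -/
noncomputable def torsionByQuotEquiv (a : R) (ha : a ≠ 0) :
    (R ⧸ Ideal.span {a}) ≃ₗ[R]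
      Submodule.torsionBy R
        (FractionRing R ⧸ LinearMap.range (Algebra.linearMap R (FractionRing R))) a := by
  set K := FractionRing R
  set A : Submodule R K := LinearMap.range (Algebra.linearMap R K)
  have haK : (algebraMap R K) a ≠ 0 := fun h =>
    ha (IsFractionRing.injective R K (by rw [h, map_zero]))
  set g : R →ₗ[R] K ⧸ A :=
    A.mkQ.comp (LinearMap.toSpanSingleton R K ((algebraMap R K a)⁻¹)) with hg
  have hmem : ∀ r : R, g r ∈ Submodule.torsionBy R (K ⧸ A) a := by
    intro r
    rw [Submodule.mem_torsionBy_iff, hg, LinearMap.comp_apply,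
      LinearMap.toSpanSingleton_apply, Submodule.mkQ_apply, ← Submodule.Quotient.mk_smul,
      Submodule.Quotient.mk_eq_zero]
    refine ⟨r, ?_⟩
    rw [Algebra.linearMap_apply, smul_smul, Algebra.smul_def, map_mul,
      mul_comm ((algebraMap R K) a), mul_assoc, mul_inv_cancel₀ haK, mul_one]
  set φ : R →ₗ[R] Submodule.torsionBy R (K ⧸ A) a :=
    g.codRestrict (Submodule.torsionBy R (K ⧸ A) a) hmem with hφ
  have hker : LinearMap.ker φ = Ideal.span {a} := by
    ext r
    simp only [hφ, LinearMap.mem_ker, Ideal.mem_span_singleton]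
    constructor
    · intro h
      have h' : g r = 0 := congrArg Subtype.val h
      simp only [hg, LinearMap.comp_apply, LinearMap.toSpanSingleton_apply,
        Submodule.mkQ_apply, Submodule.Quotient.mk_eq_zero] at h'
      obtain ⟨s, hs⟩ := h'
      simp only [Algebra.linearMap_apply, Algebra.smul_def] at hs
      refine ⟨s, IsFractionRing.injective R K ?_⟩
      rw [map_mul, hs, mul_comm ((algebraMap R K) a), mul_assoc,
        inv_mul_cancel₀ haK, mul_one]
    · rintro ⟨s, rfl⟩
      have hg0 : g (a * s) = 0 := by
        simp only [hg, LinearMap.comp_apply, LinearMap.toSpanSingleton_apply,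
          Submodule.mkQ_apply, Submodule.Quotient.mk_eq_zero]
        refine ⟨s, ?_⟩
        rw [Algebra.linearMap_apply, Algebra.smul_def, map_mul,
          mul_comm ((algebraMap R K) a), mul_assoc, mul_inv_cancel₀ haK, mul_one]
      ext
      simpa [hφ] using hg0
  have hsurj : Function.Surjective φ := by
    rintro ⟨y, hy⟩
    obtain ⟨q, rfl⟩ := Submodule.mkQ_surjective A y
    rw [Submodule.mem_torsionBy_iff, ← map_smul, Submodule.mkQ_apply,
      Submodule.Quotient.mk_eq_zero] at hy
    obtain ⟨s, hs⟩ := hy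
    simp only [Algebra.linearMap_apply] at hs
    have key : s • ((algebraMap R K) a)⁻¹ = q := by
      rw [Algebra.smul_def, hs, Algebra.smul_def, mul_comm ((algebraMap R K) a),
        mul_assoc, mul_inv_cancel₀ haK, mul_one]
    refine ⟨s, ?_⟩
    ext
    simp only [hφ, LinearMap.codRestrict_apply, hg, LinearMap.comp_apply,
      LinearMap.toSpanSingleton_apply, key, Submodule.mkQ_apply]
  exact (Submodule.quotEquivOfEq _ _ hker.symm) ≪≫ₗ φ.quotKerEquivOfSurjective hsurj

end Aux

universe u v

theorem torsion_dual_equiv_self_aux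
    (R : Type u) [CommRing R] [IsDomain R] [IsPrincipalIdealRing R]
    (N : Type v) [AddCommGroup N] [Module R N] [Module.Finite R N]
    (htor : Module.IsTorsion R N) :
    Nonempty
      ((N →ₗ[R]
          (FractionRing R ⧸ LinearMap.range (Algebra.linearMap R (FractionRing R)))) ≃ₗ[R]
        N) := by
  set K := FractionRing R
  set QR := K ⧸ LinearMap.range (Algebra.linearMap R K)
  -- pass to a universe-adjusted copy of N
  let N' := ULift.{u} N
  let u' : N' ≃ₗ[R] N := ULift.moduleEquiv
  have htor' : Module.IsTorsion R N' := by
    intro x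
    obtain ⟨r, hr⟩ := @htor (u' x)
    refine ⟨r, u'.injective ?_⟩
    rw [Submonoid.smul_def, map_smul, ← Submonoid.smul_def, hr, map_zero]
  have : Module.Finite R N' := Module.Finite.equiv u'.symm
  obtain ⟨ι, hι, p, hp, e, ⟨f⟩⟩ := Module.equiv_directSum_of_isTorsion htor'
  have hpe : ∀ i, p i ^ e i ≠ 0 := fun i => pow_ne_zero _ (hp i).ne_zero
  have : DecidableEq ι := Classical.decEq ι
  let M := fun i => R ⧸ R ∙ p i ^ e i
  let E1 : (N →ₗ[R] QR) ≃ₗ[R] ((⨁ i, M i) →ₗ[R] QR) :=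
    LinearEquiv.arrowCongr (u'.symm ≪≫ₗ f) (LinearEquiv.refl R QR)
  let E2 : ((⨁ i, M i) →ₗ[R] QR) ≃ₗ[R] (∀ i, M i →ₗ[R] QR) := (DFinsupp.lsum R).symm
  let E3 : (∀ i, M i →ₗ[R] QR) ≃ₗ[R] (∀ i, M i) :=
    LinearEquiv.piCongrRight fun i =>
      (homQuotEquivTorsionBy QR (p i ^ e i)) ≪≫ₗ (torsionByQuotEquiv R _ (hpe i)).symm
  let E4 : (∀ i, M i) ≃ₗ[R] (⨁ i, M i) := (DirectSum.linearEquivFunOnFintype R ι M).symm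
  exact ⟨E1 ≪≫ₗ E2 ≪≫ₗ E3 ≪≫ₗ E4 ≪≫ₗ f.symm ≪≫ₗ u'⟩

/-- Let `R` be a PID with field of fractions `Q(R)` and let `Q(R)/R` be the
quotient `R`-module of `Q(R)` by the canonical image of `R`. For every finitely generated
torsion `R`-module `N`, the dual module `N^∨ = Hom_R(N, Q(R)/R)` is isomorphic to `N`. -/
theorem torsion_dual_equiv_self
    (R : Type*) [CommRing R] [IsDomain R] [IsPrincipalIdealRing R]
    (N : Type*) [AddCommGroup N] [Module R N] [Module.Finite R N]
    (htor : Module.IsTorsion R N) :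
    Nonempty
      ((N →ₗ[R]
          (FractionRing R ⧸ LinearMap.range (Algebra.linearMap R (FractionRing R)))) ≃ₗ[R]
        N) :=
  torsion_dual_equiv_self_aux R N htor
end

section
/- Let K be a number field, R = 𝓞_K its ring of integers, M₀ a finitely generated R-module, ι a finite type, and v : ι → M₀ a realization. Let i ∈ ι be neither a loop nor a coloop, i.e., rk({i}) = 1 and rk(ι \ {i}) = r where r = rk(ι). Then the evaluated Tutte polynomial satisfies deletion–contraction: T̃_{(M₀,v)}(x,y) = T̃_{(M₀, v|_{ι∖{i}})}(x,y) + T̃_{(M₀/span{v_i}, π∘v|_{ι∖{i}})}(x,y), where π : M₀ → M₀/Submodule.span R {v_i} is the canonical quotient map and each evaluated Tutte polynomial is computed with the rank function and rank of its own realization. -/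
/-!
Split the subsets `A ⊆ ι` according to whether they contain `i`. Those that do not are exactly
the subsets of the deletion, with the same rank and multiplicity, and the total rank is unchanged
because `i` is not a coloop. Those that do are `insert i B` with `B` a subset of the contraction:
quotienting `M₀` by `span {v i}` and then by the span of the images of `B` is quotienting by
`span (v '' insert i B)`, so the multiplicity is unchanged; after tensoring with `K` the quotient
map has kernel the line spanned by `v i` (right exactness of `K ⊗ -`), so every rank, and `|A|`,
drops by exactly one because `i` is not a loop.
-/

open scoped TensorProduct
open NumberField

/-- The rank of a finite subset `A` of the ground set: the dimension over `K` of the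
`K`-span of the images of `v i` (`i ∈ A`) in `M ⊗[𝓞 K] K`. -/
noncomputable def rkFun (K : Type) [Field K] [NumberField K]
    {ι M : Type} [AddCommGroup M] [Module (𝓞 K) M]
    (v : ι → M) (A : Finset ι) : ℕ :=
  Module.finrank K
    (Submodule.span K ((fun i => (1 : K) ⊗ₜ[𝓞 K] v i) '' (A : Set ι)))

/-- The multiplicity `m(A)`: the cardinality of the torsion submodule of
`M(A) = M ⧸ span (𝓞 K) (v '' A)`. -/
noncomputable def mFun (K : Type) [Field K] [NumberField K]
    {ι M : Type} [AddCommGroup M] [Module (𝓞 K) M]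
    (v : ι → M) (A : Finset ι) : ℕ :=
  Nat.card (Submodule.torsion (𝓞 K) (M ⧸ Submodule.span (𝓞 K) (v '' (A : Set ι))))

/-- The evaluated Tutte polynomial
`T̃(x,y) = Σ_{A ⊆ ι} m(A) (x-1)^(r - rk A) (y-1)^(|A| - rk A) ∈ ℤ[x,y]`,
realized as a multivariate polynomial in the two variables `X 0 = x`, `X 1 = y`. -/
noncomputable def tuttePoly (K : Type) [Field K] [NumberField K]
    {ι M : Type} [Fintype ι] [AddCommGroup M] [Module (𝓞 K) M]
    (v : ι → M) : MvPolynomial (Fin 2) ℤ :=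
  ∑ A : Finset ι,
    (mFun K v A : MvPolynomial (Fin 2) ℤ) *
      (MvPolynomial.X 0 - 1) ^ (rkFun K v Finset.univ - rkFun K v A) *
      (MvPolynomial.X 1 - 1) ^ (A.card - rkFun K v A)

lemma Finset.sum_powerset_map {α β γ : Type*} [AddCommMonoid γ] [DecidableEq β] (s : Finset α)
    (e : α ↪ β) (g : Finset β → γ) :
    ∑ A ∈ (s.map e).powerset, g A = ∑ B ∈ s.powerset, g (B.map e) := by
  simp_rw [map_eq_image, powerset_image]
  exact sum_image fun _ _ _ _ h => image_injective e.injective h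

lemma Submodule.natCard_torsion_congr {R M N : Type*} [CommRing R] [AddCommGroup M] [Module R M]
    [AddCommGroup N] [Module R N] (e : M ≃ₗ[R] N) :
    Nat.card (torsion R M) = Nat.card (torsion R N) :=
  Nat.card_congr <| e.toEquiv.subtypeEquiv fun x => by
    simp [Submonoid.smul_def, ← map_smul]

lemma Submodule.ker_baseChange_mkQ {R M : Type*} [CommRing R] [AddCommGroup M] [Module R M]
    (A : Type*) [CommRing A] [Algebra R A] (N : Submodule R M) :
    LinearMap.ker (N.mkQ.baseChange A) = N.baseChange A :=
  LinearMap.exact_iff.mp (lTensor_exact A (LinearMap.exact_subtype_mkQ N) N.mkQ_surjective)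

lemma LinearMap.finrank_map_add_finrank_ker {K V W : Type*} [Field K] [AddCommGroup V] [Module K V]
    [AddCommGroup W] [Module K W] (f : V →ₗ[K] W) (T : Submodule K V)
    [FiniteDimensional K (ker f)] [FiniteDimensional K T] :
    Module.finrank K (T.map f) + Module.finrank K (ker f) =
      Module.finrank K (ker f ⊔ T : Submodule K V) := by
  have hrn := (f.domRestrict (ker f ⊔ T)).finrank_range_add_finrank_ker
  have hker : (ker f).map f = ⊥ := le_bot_iff.mp (Submodule.map_comap_le f ⊥)
  rw [range_domRestrict, Submodule.map_sup, hker, bot_sup_eq] at hrn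
  rw [← hrn, ker_domRestrict, (Submodule.comapSubtypeEquivOfLe le_sup_left).finrank_eq]

section Restriction

variable (K : Type) [Field K] [NumberField K] {ι M : Type} [AddCommGroup M] [Module (𝓞 K) M]

lemma rkFun_subtype (p : ι → Prop) (v : ι → M) (B : Finset (Subtype p)) :
    rkFun K (fun j : Subtype p => v j) B = rkFun K v (B.map (Function.Embedding.subtype p)) := by
  unfold rkFun
  rw [Finset.coe_map, Set.image_image]
  rfl

lemma mFun_subtype (p : ι → Prop) (v : ι → M) (B : Finset (Subtype p)) :
    mFun K (fun j : Subtype p => v j) B = mFun K v (B.map (Function.Embedding.subtype p)) := by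
  unfold mFun
  rw [Finset.coe_map, Set.image_image]
  rfl

lemma tuttePoly_subtype [DecidableEq ι] (p : ι → Prop) [Fintype (Subtype p)] (v : ι → M) :
    tuttePoly K (fun j : Subtype p => v j) =
      ∑ A ∈ (Finset.univ.map (Function.Embedding.subtype p)).powerset,
        (mFun K v A : MvPolynomial (Fin 2) ℤ) *
          (MvPolynomial.X 0 - 1) ^
            (rkFun K v (Finset.univ.map (Function.Embedding.subtype p)) - rkFun K v A) *
          (MvPolynomial.X 1 - 1) ^ (A.card - rkFun K v A) := by
  rw [tuttePoly, Finset.sum_powerset_map, Finset.powerset_univ]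
  simp only [rkFun_subtype, mFun_subtype, Finset.card_map]

end Restriction

section Contraction

variable (K : Type) [Field K] [NumberField K] {ι M : Type} [DecidableEq ι]
  [AddCommGroup M] [Module (𝓞 K) M]

lemma mFun_quotient_span_singleton (v : ι → M) (i : ι) (A : Finset ι) :
    mFun K (fun j => (Submodule.Quotient.mk (v j) : M ⧸ Submodule.span (𝓞 K) {v i})) A =
      mFun K v (insert i A) := by
  let N := Submodule.span (𝓞 K) {v i}
  let T := Submodule.span (𝓞 K) (v '' A)
  refine Submodule.natCard_torsion_congr ((Submodule.quotEquivOfEq _ (T.map N.mkQ) ?_).trans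
      ((N.quotientQuotientEquivQuotientSup T).trans (Submodule.quotEquivOfEq _ _ ?_)))
  · rw [Submodule.map_span, Set.image_image]
    rfl
  · rw [Finset.coe_insert, Set.image_insert_eq, Submodule.span_insert]

lemma rkFun_quotient_span_singleton_add (v : ι → M) (i : ι) (A : Finset ι) :
    rkFun K (fun j => (Submodule.Quotient.mk (v j) : M ⧸ Submodule.span (𝓞 K) {v i})) A +
      rkFun K v {i} = rkFun K v (insert i A) := by
  let f := (Submodule.span (𝓞 K) {v i}).mkQ.baseChange K
  let g := fun j => (1 : K) ⊗ₜ[𝓞 K] v j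
  have hker : LinearMap.ker f = Submodule.span K (g '' ({i} : Finset ι)) := by
    rw [Submodule.ker_baseChange_mkQ, Submodule.baseChange_span, Finset.coe_singleton,
      Set.image_singleton, Set.image_singleton]
    rfl
  have hmap : Submodule.span K ((fun j => (1 : K) ⊗ₜ[𝓞 K]
      (Submodule.Quotient.mk (v j) : M ⧸ Submodule.span (𝓞 K) {v i})) '' A) =
      (Submodule.span K (g '' A)).map f := by
    rw [Submodule.map_span, Set.image_image]
    rfl
  have hsup : Submodule.span K (g '' (insert i A : Finset ι)) =
      LinearMap.ker f ⊔ Submodule.span K (g '' A) := by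
    rw [hker, Finset.coe_insert, Set.image_insert_eq, Submodule.span_insert, Finset.coe_singleton,
      Set.image_singleton]
  have : FiniteDimensional K (Submodule.span K (g '' A)) :=
    FiniteDimensional.span_of_finite K (A.finite_toSet.image g)
  have : FiniteDimensional K (LinearMap.ker f) :=
    hker ▸ FiniteDimensional.span_of_finite K (Set.toFinite _)
  unfold rkFun
  rw [hmap, hsup, ← hker]
  exact f.finrank_map_add_finrank_ker _

end Contraction

theorem tuttePoly_deletion_contraction_general
    (K : Type) [Field K] [NumberField K]
    (ι : Type) [Fintype ι] [DecidableEq ι]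
    (M₀ : Type) [AddCommGroup M₀] [Module (𝓞 K) M₀]
    (v : ι → M₀) (i : ι)
    (hnotloop : rkFun K v {i} = 1)
    (hnotcoloop : rkFun K v {i}ᶜ = rkFun K v Finset.univ) :
    tuttePoly K v =
      tuttePoly K (fun j : {j : ι // j ≠ i} => v (j : ι)) +
      tuttePoly K (fun j : {j : ι // j ≠ i} =>
        (Submodule.Quotient.mk (v (j : ι)) : M₀ ⧸ Submodule.span (𝓞 K) {v i})) := by
  let w := fun j => (Submodule.Quotient.mk (v j) : M₀ ⧸ Submodule.span (𝓞 K) {v i})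
  have hcompl : Finset.univ.map (Function.Embedding.subtype (· ≠ i)) = {i}ᶜ := by
    rw [Finset.univ_map_subtype, Finset.filter_ne', Finset.compl_singleton]
  have hrank : rkFun K w {i}ᶜ + 1 = rkFun K v Finset.univ := by
    rw [← hnotloop, rkFun_quotient_span_singleton_add, Finset.insert_compl_self]
  rw [tuttePoly_subtype K _ v, tuttePoly_subtype K _ w, hcompl, tuttePoly, ← hnotcoloop,
    ← Finset.powerset_univ, ← Finset.insert_compl_self i,
    Finset.sum_powerset_insert (by simp)]
  refine congrArg _ (Finset.sum_congr rfl fun A hA => ?_)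
  have hiA : i ∉ A := fun h => by simpa using Finset.mem_powerset.mp hA h
  rw [← mFun_quotient_span_singleton, Finset.card_insert_of_notMem hiA,
    ← rkFun_quotient_span_singleton_add, hnotloop, hnotcoloop, ← hrank, Nat.add_sub_add_right,
    Nat.add_sub_add_right]

/-- deletion–contraction for an element `i` that is neither a loop
(`rk {i} = 1`) nor a coloop (`rk (ι ∖ {i}) = r`). -/
theorem tuttePoly_deletion_contraction
    (K : Type) [Field K] [NumberField K]
    (ι : Type) [Fintype ι] [DecidableEq ι]
    (M₀ : Type) [AddCommGroup M₀] [Module (𝓞 K) M₀] [Module.Finite (𝓞 K) M₀]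
    (v : ι → M₀) (i : ι)
    (hnotloop : rkFun K v {i} = 1)
    (hnotcoloop : rkFun K v {i}ᶜ = rkFun K v Finset.univ) :
    tuttePoly K v =
      tuttePoly K (fun j : {j : ι // j ≠ i} => v (j : ι)) +
      tuttePoly K (fun j : {j : ι // j ≠ i} =>
        (Submodule.Quotient.mk (v (j : ι)) : M₀ ⧸ Submodule.span (𝓞 K) {v i})) :=
  tuttePoly_deletion_contraction_general K ι M₀ v i hnotloop hnotcoloop
end

section
/- Let K be a number field, R = 𝓞_K its ring of integers, M₀ a finitely generated torsion-free R-module, ι a finite type, and v : ι → M₀ a realization. If i ∈ ι is a loop (rk({i}) = 0), then the evaluated Tutte polynomial satisfies T̃_{(M₀,v)}(x,y) = y · T̃_{(M₀, v|_{ι∖{i}})}(x,y). -/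
/-!
Over a torsion-free module, `1 ⊗ m = 0` in `M ⊗ K` forces `m = 0`, so a loop is the zero vector.
Adjoining a zero vector to a set `A` changes neither the span of `v '' A` (hence neither `m(A)`
nor `rk(A)`) nor the total rank, and raises `|A|` by one. So for `A ⊆ ι ∖ {i}` the terms of
`A` and `insert i A` add up to `(1 + (y - 1))` times the term of `A` in the restricted polynomial.
-/

open scoped TensorProduct
open NumberField

open Finset

namespace Finset

theorem powerset_map {α β : Type*} (f : α ↪ β) (s : Finset α) :
    (s.map f).powerset = s.powerset.map (mapEmbedding f).toEmbedding := by
  ext t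
  simp only [mem_powerset, subset_map_iff, mem_map, RelEmbedding.coe_toEmbedding,
    mapEmbedding_apply]
  exact exists_congr fun u => by rw [eq_comm]

theorem univ_eq_insert_map_subtype_ne {ι : Type*} [Fintype ι] [DecidableEq ι] (i : ι) :
    (univ : Finset ι) = insert i (univ.map (Function.Embedding.subtype (· ≠ i))) := by
  rw [univ_map_subtype, filter_ne', insert_erase (mem_univ i)]

theorem sum_finset_eq_sum_add_sum_insert {ι β : Type*} [Fintype ι] [DecidableEq ι]
    [AddCommMonoid β] (i : ι) (f : Finset ι → β) :
    ∑ A : Finset ι, f A =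
      ∑ B : Finset {j // j ≠ i},
        (f (B.map (Function.Embedding.subtype _)) +
          f (insert i (B.map (Function.Embedding.subtype _)))) := by
  have hi : i ∉ univ.map (Function.Embedding.subtype (· ≠ i)) := by simp
  rw [← powerset_univ, univ_eq_insert_map_subtype_ne i, sum_powerset_insert hi, powerset_map,
    sum_map, sum_map, powerset_univ, ← sum_add_distrib]
  rfl

end Finset

theorem eq_zero_of_one_tmul_eq_zero {R K M : Type*} [CommRing R] [Field K] [Algebra R K]
    [IsFractionRing R K] [AddCommGroup M] [Module R M] (htf : Submodule.torsion R M = ⊥)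
    {m : M} (h : (1 : K) ⊗ₜ[R] m = 0) : m = 0 := by
  have hloc : IsLocalizedModule (nonZeroDivisors R) (TensorProduct.mk R K M 1) :=
    (isLocalizedModule_iff_isBaseChange (nonZeroDivisors R) K _).mpr
      (TensorProduct.isBaseChange _ _ _)
  obtain ⟨s, hs⟩ :=
    (IsLocalizedModule.eq_zero_iff (nonZeroDivisors R) (TensorProduct.mk R K M 1)).mp h
  have hm : m ∈ Submodule.torsion R M := ⟨s, hs⟩
  rwa [htf, Submodule.mem_bot] at hm

section RealizedMatroid

variable (K : Type) [Field K] [NumberField K] {ι κ M : Type} [AddCommGroup M] [Module (𝓞 K) M]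

theorem one_tmul_eq_zero_of_rkFun_singleton_eq_zero {v : ι → M} {i : ι}
    (h : rkFun K v {i} = 0) : (1 : K) ⊗ₜ[𝓞 K] v i = 0 := by
  rwa [rkFun, coe_singleton, Set.image_singleton, Submodule.finrank_eq_zero,
    Submodule.span_singleton_eq_bot] at h

theorem rkFun_le_card (v : ι → M) (A : Finset ι) : rkFun K v A ≤ A.card := by
  classical
  rw [rkFun, ← coe_image]
  exact (finrank_span_finset_le_card _).trans card_image_le

theorem mFun_map (v : ι → M) (e : κ ↪ ι) (B : Finset κ) :
    mFun K v (B.map e) = mFun K (v ∘ e) B := by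
  rw [mFun, mFun, coe_map, Set.image_comp]

theorem rkFun_map (v : ι → M) (e : κ ↪ ι) (B : Finset κ) :
    rkFun K v (B.map e) = rkFun K (v ∘ e) B := by
  rw [rkFun, rkFun, coe_map, Set.image_image]
  rfl

variable [DecidableEq ι] {v : ι → M} {i : ι}

theorem mFun_insert_of_eq_zero (hv : v i = 0) (A : Finset ι) :
    mFun K v (insert i A) = mFun K v A := by
  rw [mFun, mFun, coe_insert, Set.image_insert_eq, hv, Submodule.span_insert_zero]

theorem rkFun_insert_of_eq_zero (hv : v i = 0) (A : Finset ι) :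
    rkFun K v (insert i A) = rkFun K v A := by
  rw [rkFun, rkFun, coe_insert, Set.image_insert_eq, hv, TensorProduct.tmul_zero,
    Submodule.span_insert_zero]

theorem tuttePoly_eq_X_mul_of_eq_zero [Fintype ι] (hv : v i = 0) :
    tuttePoly K v = MvPolynomial.X 1 * tuttePoly K (fun j : {j : ι // j ≠ i} => v (j : ι)) := by
  rw [tuttePoly, tuttePoly, sum_finset_eq_sum_add_sum_insert i, mul_sum]
  set e := Function.Embedding.subtype (· ≠ i)
  have hrestrict : (fun j : {j : ι // j ≠ i} => v j) = v ∘ e := rfl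
  have hrank : rkFun K v univ = rkFun K (v ∘ e) univ := by
    rw [univ_eq_insert_map_subtype_ne i, rkFun_insert_of_eq_zero K hv, rkFun_map]
  refine sum_congr rfl fun B _ => ?_
  have hi : i ∉ B.map e := by simp [e]
  have hcard :
      B.card - rkFun K (v ∘ e) B + 1 = (insert i (B.map e)).card - rkFun K v (B.map e) := by
    rw [card_insert_of_notMem hi, card_map, rkFun_map]
    have := rkFun_le_card K (v ∘ e) B
    omega
  rw [mFun_insert_of_eq_zero K hv, rkFun_insert_of_eq_zero K hv, ← hcard, hrank, hrestrict,
    mFun_map, rkFun_map, card_map]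
  ring

end RealizedMatroid

theorem tuttePoly_loop_general
    (K : Type) [Field K] [NumberField K]
    (ι : Type) [Fintype ι] [DecidableEq ι]
    (M₀ : Type) [AddCommGroup M₀] [Module (𝓞 K) M₀]
    (htf : Submodule.torsion (𝓞 K) M₀ = ⊥)
    (v : ι → M₀) (i : ι)
    (hloop : rkFun K v {i} = 0) :
    tuttePoly K v =
      MvPolynomial.X 1 * tuttePoly K (fun j : {j : ι // j ≠ i} => v (j : ι)) :=
  tuttePoly_eq_X_mul_of_eq_zero K
    (eq_zero_of_one_tmul_eq_zero htf (one_tmul_eq_zero_of_rkFun_singleton_eq_zero K hloop))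

/-- if `M₀` is torsion-free and `i` is a loop (`rk {i} = 0`), then
`T̃_{(M₀,v)}(x,y) = y · T̃_{(M₀, v restricted to ι∖{i})}(x,y)`. -/
theorem tuttePoly_loop
    (K : Type) [Field K] [NumberField K]
    (ι : Type) [Fintype ι] [DecidableEq ι]
    (M₀ : Type) [AddCommGroup M₀] [Module (𝓞 K) M₀] [Module.Finite (𝓞 K) M₀]
    (htf : Submodule.torsion (𝓞 K) M₀ = ⊥)
    (v : ι → M₀) (i : ι)
    (hloop : rkFun K v {i} = 0) :
    tuttePoly K v =
      MvPolynomial.X 1 * tuttePoly K (fun j : {j : ι // j ≠ i} => v (j : ι)) :=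
  tuttePoly_loop_general K ι M₀ htf v i hloop
end

section
/- Let K be a number field, R = 𝓞_K its ring of integers, M₀ a finitely generated R-module, ι a finite type, and v : ι → M₀ a realization whose image generates M₀ (i.e., Submodule.span R {v_i : i ∈ ι} = ⊤, so M(ι) = 0). If i ∈ ι is a coloop (rk(ι∖{i}) = r − 1 where r = rk(ι)), then the evaluated Tutte polynomial satisfies T̃_{(M₀,v)}(x,y) = x · T̃_{(M₀/span{v_i}, π∘v|_{ι∖{i}})}(x,y), where π : M₀ → M₀ / Submodule.span R {v_i} is the canonical quotient map. -/
open scoped TensorProduct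
open NumberField

/-!
Tensoring with `K`, the coloop condition says `1 ⊗ v i ∉ span K {1 ⊗ v j | j ≠ i}`. Hence for
`A ∌ i`, adding `i` raises the rank of `A` by one, while contracting `i` leaves it unchanged: by
right exactness the contraction's `K`-realization is the quotient by `K ∙ (1 ⊗ v i)`, which meets
the span of `A` trivially. The contraction's module at `A` is `M(A ∪ {i})` by the third
isomorphism theorem. Finally `v i`, together with the `v j` for `j ≠ i`, spans `M₀` and is
`𝓞 K`-independent of them, so `M(A) → M(A ∪ {i})` is a bijection on torsion and
`m(A) = m(A ∪ {i})`. The terms of `A` and `A ∪ {i}` therefore add up to `(x - 1) + 1 = x` times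
the term of `A` in the contraction.
-/

open scoped nonZeroDivisors
open Submodule Module Finset

theorem Finset.sum_eq_sum_subtype_ne_add_insert {ι β : Type*} [Fintype ι] [DecidableEq ι]
    [AddCommMonoid β] (i : ι) (g : Finset ι → β) :
    ∑ A, g A = ∑ B : Finset {j // j ≠ i},
      (g (B.map (.subtype _)) + g (insert i (B.map (.subtype _)))) := by
  have hpow (h : Finset ι → β) :
      ∑ A ∈ (univ.erase i).powerset, h A = ∑ B : Finset {j // j ≠ i}, h (B.map (.subtype _)) := by
    have hne {A : Finset ι} (hA : A ∈ (univ.erase i).powerset) : ∀ j ∈ A, j ≠ i := fun j hj =>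
      (mem_erase.mp (mem_powerset.mp hA hj)).1
    refine sum_nbij' (fun A => A.subtype (· ≠ i)) (fun B => B.map (.subtype _)) ?_ ?_ ?_ ?_ ?_
    · simp
    · intro B _
      simpa [subset_iff] using fun _ hj _ => hj
    · intro A hA
      exact subtype_map_of_mem (hne hA)
    · intro B _
      ext j
      simpa using fun _ => j.2
    · intro A hA
      simp only [subtype_map_of_mem (hne hA)]
  rw [sum_add_distrib, ← hpow, ← hpow (fun A => g (insert i A)),
    ← sum_powerset_insert (notMem_erase i univ), insert_erase (mem_univ i), powerset_univ]

theorem Submodule.finrank_span_insert_of_notMem {K V : Type*} [DivisionRing K] [AddCommGroup V]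
    [Module K V] {s : Set V} (hs : s.Finite) {x : V} (hx : x ∉ span K s) :
    finrank K (span K (insert x s)) = finrank K (span K s) + 1 := by
  have : FiniteDimensional K (span K s) := FiniteDimensional.span_of_finite K hs
  have hx0 : x ≠ 0 := fun h => hx (h ▸ zero_mem _)
  have := finrank_sup_add_finrank_inf_eq (span K s) (K ∙ x)
  rwa [(disjoint_span_singleton_of_notMem hx).eq_bot, finrank_bot, add_zero,
    finrank_span_singleton hx0, sup_comm, ← span_insert] at this

theorem LinearMap.finrank_map_of_disjoint_ker {R M N : Type*} [Ring R] [AddCommGroup M]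
    [Module R M] [AddCommGroup N] [Module R N] (f : M →ₗ[R] N) {S : Submodule R M}
    (h : Disjoint S (LinearMap.ker f)) : finrank R (S.map f) = finrank R S := by
  rw [← LinearMap.range_domRestrict]
  exact (LinearEquiv.ofInjective _ (LinearMap.injective_domRestrict_iff.mpr h)).finrank_eq.symm

theorem Submodule.ker_baseChange_mkQ_span_singleton_le {R A M : Type*} [CommRing R]
    [CommRing A] [Algebra R A] [AddCommGroup M] [Module R M] (x : M) :
    LinearMap.ker ((R ∙ x).mkQ.baseChange A) ≤ A ∙ ((1 : A) ⊗ₜ[R] x) := by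
  have hrange (w : A ⊗[R] (R ∙ x)) : (R ∙ x).subtype.lTensor A w ∈ A ∙ ((1 : A) ⊗ₜ[R] x) := by
    induction w using TensorProduct.induction_on with
    | zero => simp
    | tmul a y =>
      obtain ⟨y, hy⟩ := y
      obtain ⟨c, rfl⟩ := mem_span_singleton.mp hy
      exact mem_span_singleton.mpr ⟨c • a, by simp [TensorProduct.smul_tmul']⟩
    | add w w' hw hw' => simpa using add_mem hw hw'
  intro z hz
  obtain ⟨w, rfl⟩ := (lTensor_exact A (LinearMap.exact_subtype_mkQ (R ∙ x)) (mkQ_surjective _) z).mp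
    (by rwa [← LinearMap.baseChange_eq_ltensor])
  exact hrange w

theorem eq_zero_of_smul_mem_span_of_tmul_notMem {R K M ι : Type*} [CommRing R] [Field K]
    [Algebra R K] [FaithfulSMul R K] [AddCommGroup M] [Module R M] {v : ι → M} {s : Set ι}
    {x : M} (hx : (1 : K) ⊗ₜ[R] x ∉ span K ((fun j => (1 : K) ⊗ₜ[R] v j) '' s)) {c : R}
    (hc : c • x ∈ span R (v '' s)) : c = 0 := by
  by_contra hc0
  have hmem : (1 : K) ⊗ₜ[R] (c • x) ∈
      (span K ((fun j => (1 : K) ⊗ₜ[R] v j) '' s)).restrictScalars R := by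
    have := mem_map_of_mem (f := TensorProduct.mk R K M 1) hc
    rw [map_span, Set.image_image] at this
    exact span_le_restrictScalars R K _ this
  rw [TensorProduct.tmul_smul, ← algebraMap_smul K, restrictScalars_mem,
    smul_mem_iff _ ((map_ne_zero_iff _ (FaithfulSMul.algebraMap_injective R K)).mpr hc0)] at hmem
  exact hx hmem

section Torsion

variable {R M N : Type*} [CommRing R] [AddCommGroup M] [Module R M] [AddCommGroup N] [Module R N]

theorem Submodule.map_mem_torsion (f : M →ₗ[R] N) {x : M} (hx : x ∈ torsion R M) :
    f x ∈ torsion R N := by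
  obtain ⟨a, ha⟩ := (mem_torsion_iff x).mp hx
  refine (mem_torsion_iff _).mpr ⟨a, ?_⟩
  rw [Submonoid.smul_def] at ha ⊢
  rw [← map_smul, ha, map_zero]

theorem LinearEquiv.card_torsion_eq (e : M ≃ₗ[R] N) :
    Nat.card (torsion R M) = Nat.card (torsion R N) :=
  Nat.card_congr <| e.toEquiv.subtypeEquiv fun _ =>
    ⟨map_mem_torsion e.toLinearMap, fun h => by simpa using map_mem_torsion e.symm.toLinearMap h⟩

variable {S W : Submodule R M} {x : M}

theorem Submodule.mem_of_smul_mem_of_mem_sup_span_singleton (hSW : S ≤ W)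
    (hx : ∀ c : R, c • x ∈ W → c = 0) {a : R} (ha : a ∈ R⁰) {m : M} (hm : m ∈ S ⊔ R ∙ x)
    (ham : a • m ∈ S) : m ∈ S := by
  obtain ⟨s, hs, _, hy, rfl⟩ := mem_sup.mp hm
  obtain ⟨c, rfl⟩ := mem_span_singleton.mp hy
  have hc : (a * c) • x ∈ S := by
    simpa [smul_add, mul_smul] using sub_mem ham (S.smul_mem a hs)
  obtain rfl : c = 0 := (mul_left_mem_nonZeroDivisors_eq_zero_iff ha).mp (hx _ (hSW hc))
  simpa using hs

theorem Submodule.exists_smul_mem_of_smul_mem_sup_span_singleton (hSW : S ≤ W)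
    (hsup : (R ∙ x) ⊔ W = ⊤) (hx : ∀ c : R, c • x ∈ W → c = 0) {a : R} {m : M}
    (ham : a • m ∈ S ⊔ R ∙ x) : ∃ u, u - m ∈ R ∙ x ∧ a • u ∈ S := by
  obtain ⟨_, hy, u, hu, rfl⟩ := mem_sup.mp (hsup ▸ mem_top : m ∈ (R ∙ x) ⊔ W)
  obtain ⟨c, rfl⟩ := mem_span_singleton.mp hy
  obtain ⟨s, hs, _, hz, hsd⟩ := mem_sup.mp ham
  obtain ⟨d, rfl⟩ := mem_span_singleton.mp hz
  have hd : (d - a * c) • x = a • u - s := by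
    linear_combination (norm := module) hsd
  have hd0 : d - a * c = 0 := hx _ (hd ▸ sub_mem (W.smul_mem a hu) (hSW hs))
  refine ⟨u, mem_span_singleton.mpr ⟨-c, by simp⟩, ?_⟩
  rw [hd0, zero_smul, eq_comm, sub_eq_zero] at hd
  exact hd ▸ hs

theorem Submodule.card_torsion_quotient_sup_span_singleton (hSW : S ≤ W)
    (hsup : (R ∙ x) ⊔ W = ⊤) (hx : ∀ c : R, c • x ∈ W → c = 0) :
    Nat.card (torsion R (M ⧸ S)) = Nat.card (torsion R (M ⧸ S ⊔ R ∙ x)) := by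
  set q := S.mapQ (S ⊔ R ∙ x) LinearMap.id le_sup_left
  refine Nat.card_eq_of_bijective (q.restrict fun t ht => map_mem_torsion q ht) ⟨?_, ?_⟩
  · rw [injective_iff_map_eq_zero]
    rintro ⟨t, ht⟩ h0
    obtain ⟨m, rfl⟩ := Quotient.mk_surjective _ t
    obtain ⟨⟨a, ha⟩, hat⟩ := (mem_torsion_iff _).mp ht
    have hm : m ∈ S ⊔ R ∙ x := by
      simpa [q, Subtype.ext_iff] using h0
    have ham : a • m ∈ S := by
      simpa [← Quotient.mk_smul] using hat
    simpa [Subtype.ext_iff] using mem_of_smul_mem_of_mem_sup_span_singleton hSW hx ha hm ham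
  · rintro ⟨y, hy⟩
    obtain ⟨m, rfl⟩ := Quotient.mk_surjective _ y
    obtain ⟨⟨a, ha⟩, hay⟩ := (mem_torsion_iff _).mp hy
    obtain ⟨u, hum, hau⟩ := exists_smul_mem_of_smul_mem_sup_span_singleton hSW hsup hx
      (a := a) (m := m) (by simpa [← Quotient.mk_smul] using hay)
    refine ⟨⟨Quotient.mk u, (mem_torsion_iff _).mpr ⟨⟨a, ha⟩, ?_⟩⟩, ?_⟩
    · simpa [← Quotient.mk_smul] using hau
    · simpa [q, Subtype.ext_iff, Quotient.eq] using mem_sup_right hum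

end Torsion

def contraction (R : Type*) {ι M : Type*} [Ring R] [AddCommGroup M] [Module R M] (v : ι → M)
    (i : ι) : {j // j ≠ i} → M ⧸ R ∙ v i :=
  fun j => Submodule.Quotient.mk (v j)

section Tutte

variable {K : Type} [Field K] [NumberField K] {ι M : Type} [AddCommGroup M] [Module (𝓞 K) M]
  {v : ι → M}

theorem rkFun_mono {A B : Finset ι} (h : A ⊆ B) : rkFun K v A ≤ rkFun K v B := by
  have : FiniteDimensional K (span K ((fun j => (1 : K) ⊗ₜ[𝓞 K] v j) '' (B : Set ι))) :=
    FiniteDimensional.span_of_finite K (B.finite_toSet.image _)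
  exact finrank_mono (span_mono (Set.image_mono h))

theorem rkFun_contraction {i : ι} (B : Finset {j // j ≠ i})
    (h : (1 : K) ⊗ₜ[𝓞 K] v i ∉
      span K ((fun j => (1 : K) ⊗ₜ[𝓞 K] v j) '' (B.map (.subtype _) : Set ι))) :
    rkFun K (contraction (𝓞 K) v i) B = rkFun K v (B.map (.subtype _)) := by
  have hspan : span K ((fun j => (1 : K) ⊗ₜ[𝓞 K] contraction (𝓞 K) v i j) '' (B : Set _)) =
      (span K ((fun j => (1 : K) ⊗ₜ[𝓞 K] v j) '' (B.map (.subtype _) : Set ι))).map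
        ((𝓞 K ∙ v i).mkQ.baseChange K) := by
    rw [map_span, coe_map, Set.image_image, Set.image_image]
    rfl
  rw [rkFun, rkFun, hspan]
  exact LinearMap.finrank_map_of_disjoint_ker _
    ((disjoint_span_singleton_of_notMem h).mono_right (ker_baseChange_mkQ_span_singleton_le _))

variable [DecidableEq ι] {i : ι}

theorem rkFun_insert_of_notMem {A : Finset ι}
    (h : (1 : K) ⊗ₜ[𝓞 K] v i ∉ span K ((fun j => (1 : K) ⊗ₜ[𝓞 K] v j) '' (A : Set ι))) :
    rkFun K v (insert i A) = rkFun K v A + 1 := by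
  rw [rkFun, coe_insert, Set.image_insert_eq]
  exact finrank_span_insert_of_notMem (A.finite_toSet.image _) h

theorem mFun_contraction (B : Finset {j // j ≠ i}) :
    mFun K (contraction (𝓞 K) v i) B = mFun K v (insert i (B.map (.subtype _))) := by
  have hspan : span (𝓞 K) (contraction (𝓞 K) v i '' (B : Set _)) =
      (span (𝓞 K) (v '' (B.map (.subtype _) : Set ι))).map (𝓞 K ∙ v i).mkQ := by
    rw [map_span, coe_map, Set.image_image, Set.image_image]
    rfl
  rw [mFun, mFun, hspan, coe_insert, Set.image_insert_eq, span_insert]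
  exact (quotientQuotientEquivQuotientSup _ _).card_torsion_eq

variable [Fintype ι]

theorem tmul_notMem_span_of_coloop (hcoloop : rkFun K v {i}ᶜ + 1 = rkFun K v univ)
    {A : Finset ι} (hA : i ∉ A) :
    (1 : K) ⊗ₜ[𝓞 K] v i ∉ span K ((fun j => (1 : K) ⊗ₜ[𝓞 K] v j) '' (A : Set ι)) := by
  intro hmem
  have hmem' : (1 : K) ⊗ₜ[𝓞 K] v i ∈
      span K ((fun j => (1 : K) ⊗ₜ[𝓞 K] v j) '' (({i}ᶜ : Finset ι) : Set ι)) :=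
    span_mono (Set.image_mono (by simpa using hA)) hmem
  have : rkFun K v univ = rkFun K v {i}ᶜ := by
    rw [rkFun, rkFun, ← insert_compl_self i, coe_insert, Set.image_insert_eq,
      span_insert_eq_span hmem']
  omega

theorem mFun_insert_of_coloop (hgen : span (𝓞 K) (Set.range v) = ⊤)
    (hcoloop : rkFun K v {i}ᶜ + 1 = rkFun K v univ) {A : Finset ι} (hA : i ∉ A) :
    mFun K v (insert i A) = mFun K v A := by
  rw [mFun, mFun, coe_insert, Set.image_insert_eq, span_insert, sup_comm]
  refine (card_torsion_quotient_sup_span_singleton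
    (W := span (𝓞 K) (v '' (({i}ᶜ : Finset ι) : Set ι))) ?_ ?_ ?_).symm
  · exact span_mono (Set.image_mono (by simpa using hA))
  · rw [← span_insert, ← Set.image_insert_eq, ← coe_insert, insert_compl_self, coe_univ,
      Set.image_univ, hgen]
  · exact fun c hc => eq_zero_of_smul_mem_span_of_tmul_notMem
      (tmul_notMem_span_of_coloop hcoloop (notMem_compl.mpr (mem_singleton_self i))) hc

end Tutte

theorem tuttePoly_coloop_general
    (K : Type) [Field K] [NumberField K]
    (ι : Type) [Fintype ι] [DecidableEq ι]
    (M₀ : Type) [AddCommGroup M₀] [Module (𝓞 K) M₀]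
    (v : ι → M₀)
    (hgen : Submodule.span (𝓞 K) (Set.range v) = ⊤)
    (i : ι)
    (hcoloop : rkFun K v {i}ᶜ + 1 = rkFun K v Finset.univ) :
    tuttePoly K v =
      MvPolynomial.X 0 * tuttePoly K (fun j : {j : ι // j ≠ i} =>
        (Submodule.Quotient.mk (v (j : ι)) : M₀ ⧸ Submodule.span (𝓞 K) {v i})) := by
  change _ = _ * tuttePoly K (contraction (𝓞 K) v i)
  have hnotMem (B : Finset {j // j ≠ i}) := tmul_notMem_span_of_coloop (K := K) hcoloop
    (A := B.map (.subtype _)) (by simp)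
  have hrk (B : Finset {j // j ≠ i}) := rkFun_contraction B (hnotMem B)
  have hrk_univ : rkFun K v univ = rkFun K (contraction (𝓞 K) v i) univ + 1 := by
    rw [hrk, univ_map_subtype, filter_ne', ← compl_singleton, hcoloop]
  rw [tuttePoly, tuttePoly, sum_eq_sum_subtype_ne_add_insert i, mul_sum]
  refine sum_congr rfl fun B _ => ?_
  rw [rkFun_insert_of_notMem (hnotMem B), mFun_contraction,
    mFun_insert_of_coloop hgen hcoloop (by simp), ← hrk, card_insert_of_notMem (by simp),
    card_map, hrk_univ, Nat.add_sub_add_right, Nat.add_sub_add_right,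
    Nat.sub_add_comm (rkFun_mono (subset_univ B))]
  ring

/-- if the image of the realization generates `M₀` (so `M(ι) = 0`) and `i`
is a coloop (`rk (ι ∖ {i}) = r − 1`), then
`T̃_{(M₀,v)}(x,y) = x · T̃_{(M₀ ⧸ span {v i}, π ∘ v restricted to ι∖{i})}(x,y)`. -/
theorem tuttePoly_coloop
    (K : Type) [Field K] [NumberField K]
    (ι : Type) [Fintype ι] [DecidableEq ι]
    (M₀ : Type) [AddCommGroup M₀] [Module (𝓞 K) M₀] [Module.Finite (𝓞 K) M₀]
    (v : ι → M₀)
    (hgen : Submodule.span (𝓞 K) (Set.range v) = ⊤)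
    (i : ι)
    (hcoloop : rkFun K v {i}ᶜ + 1 = rkFun K v Finset.univ) :
    tuttePoly K v =
      MvPolynomial.X 0 * tuttePoly K (fun j : {j : ι // j ≠ i} =>
        (Submodule.Quotient.mk (v (j : ι)) : M₀ ⧸ Submodule.span (𝓞 K) {v i})) :=
  tuttePoly_coloop_general K ι M₀ v hgen i hcoloop
end
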